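/- Filtering recursion for a hidden Markov model with rank observations: if z_t | z_{t−1} ~ N_N(f(z_{t−1}), I_N) with f a step function taking value μ̃_k on cell C_k of a finite partition {C_k} of ℝ (applied coordinatewise), and the observation is τ_t = rank(z_t), then the filtering density satisfies p(z_t | τ_{1:t}) ∝ 𝟙(z_t ∈ A_t) Σ_k N_N(z_t | μ̃_k, I_N) q_{k,t}, where the k-sum is over multi-indices k ∈ {1,...,K}^N, μ̃_k = (μ̃_{k_1},...,μ̃_{k_N}), A_t is the order cone of τ_t, and q_{k,t} = Σ_m q_{m,t−1} ∫_{C_k ∩ A_{t−1}} N_N(z | μ̃_m, I_N) dz with C_k = C_{k_1} × ... × C_{k_N}. -/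

import Mathlib

open Set MeasureTheory

/-- The N-dimensional Gaussian density with mean μ and identity covariance. -/
noncomputable def gaussPdf (N : ℕ) (μ z : Fin N → ℝ) : ℝ :=
  (2 * Real.pi) ^ (-(N : ℝ) / 2) * Real.exp (-(∑ i, (z i - μ i) ^ 2) / 2)

/-- The order cone of a permutation τ. -/
def orderCone (N : ℕ) (τ : Equiv.Perm (Fin N)) : Set (Fin N → ℝ) :=
  {z | ∀ i j, z i < z j ↔ τ i < τ j}

/-- Product cell C_k = C_{k_1} × ... × C_{k_N} of a multi-index k. -/
def cellProd (N K : ℕ) (C : Fin K → Set ℝ) (k : Fin N → Fin K) : Set (Fin N → ℝ) :=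
  {z | ∀ i, z i ∈ C (k i)}

/-! Since the transition mean `f` is constant, equal to `μ̃_k`, on each product cell `C_k`,
integrating the transition density against any integrable function `g` splits over the cells
into the Gaussian mixture `Σ_k N(z | μ̃_k, I_N) ∫_{C_k} g`. For the prior this gives `α_1`.
For `α_t = 𝟙_{A_t} · Σ_m N(· | μ̃_m, I_N) q_{m,t}` the weights become
`Σ_m q_{m,t} ∫_{C_k ∩ A_t} N(· | μ̃_m, I_N)`, which is the recursion for `q_{k,t+1}`.
Hence the claim holds with `c = 1`. -/

open Function

lemma gaussPdf_eq_prod (N : ℕ) (μ z : Fin N → ℝ) :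
    gaussPdf N μ z = ∏ i, (2 * Real.pi) ^ (-(1 : ℝ) / 2) * Real.exp (-(z i - μ i) ^ 2 / 2) := by
  rw [gaussPdf, Finset.prod_mul_distrib, Finset.prod_const, Finset.card_univ, Fintype.card_fin,
    ← Real.rpow_natCast, ← Real.rpow_mul (by positivity), ← Real.exp_sum]
  congr 2
  · ring
  · simp only [neg_div, Finset.sum_div, Finset.sum_neg_distrib]

lemma integrable_gaussPdf (N : ℕ) (μ : Fin N → ℝ) : Integrable (gaussPdf N μ) := by
  have hcoord (m : ℝ) :
      Integrable fun x : ℝ => (2 * Real.pi) ^ (-(1 : ℝ) / 2) * Real.exp (-(x - m) ^ 2 / 2) := by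
    refine (((integrable_exp_neg_mul_sq (b := 1 / 2) (by norm_num)).comp_sub_right m).const_mul
      ((2 * Real.pi) ^ (-(1 : ℝ) / 2))).congr (Filter.Eventually.of_forall fun x => ?_)
    ring_nf
  exact (Integrable.fintype_prod fun i => hcoord (μ i)).congr
    (Filter.Eventually.of_forall fun z => (gaussPdf_eq_prod N μ z).symm)

lemma measurableSet_orderCone (N : ℕ) (τ : Equiv.Perm (Fin N)) :
    MeasurableSet (orderCone N τ) := by
  have : orderCone N τ = ⋂ i, ⋂ j, {z : Fin N → ℝ | z i < z j ↔ τ i < τ j} := by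
    ext z; simp [orderCone]
  rw [this]
  refine .iInter fun i => .iInter fun j => ?_
  by_cases h : τ i < τ j
  · simpa [h] using measurableSet_lt (measurable_pi_apply i) (measurable_pi_apply j)
  · simpa [h] using measurableSet_le (measurable_pi_apply j) (measurable_pi_apply i)

section cellProd

variable {N K : ℕ} {C : Fin K → Set ℝ}

lemma measurableSet_cellProd (hC : ∀ k, MeasurableSet (C k)) (k : Fin N → Fin K) :
    MeasurableSet (cellProd N K C k) := by
  have : cellProd N K C k = ⋂ i, (fun z : Fin N → ℝ => z i) ⁻¹' C (k i) := by
    ext z; simp [cellProd]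
  rw [this]
  exact .iInter fun i => measurable_pi_apply i (hC (k i))

lemma pairwise_disjoint_cellProd (hC : Pairwise (Disjoint on C)) :
    Pairwise (Disjoint on cellProd N K C) := by
  intro k k' hne
  obtain ⟨i, hi⟩ := Function.ne_iff.mp hne
  exact Set.disjoint_left.mpr fun z hz hz' => Set.disjoint_left.mp (hC hi) (hz i) (hz' i)

lemma iUnion_cellProd (hC : ⋃ k, C k = univ) : ⋃ k, cellProd N K C k = univ := by
  refine Set.eq_univ_of_forall fun z => Set.mem_iUnion.mpr ?_
  have hz (i : Fin N) : ∃ k, z i ∈ C k := Set.mem_iUnion.mp (hC ▸ Set.mem_univ (z i))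
  choose k hk using hz
  exact ⟨k, hk⟩

end cellProd

lemma integral_mul_eq_sum_of_eqOn_partition {X ι : Type*} [MeasurableSpace X] {μ : Measure X}
    [Fintype ι] {s : ι → Set X} (hs : ∀ i, MeasurableSet (s i))
    (hdisj : Pairwise (Disjoint on s)) (hcover : ⋃ i, s i = univ)
    {φ g : X → ℝ} {c : ι → ℝ} (hφ : ∀ i, EqOn φ (fun _ => c i) (s i)) (hg : Integrable g μ) :
    ∫ x, φ x * g x ∂μ = ∑ i, c i * ∫ x in s i, g x ∂μ := by
  have hcell (i : ι) : EqOn (fun x => φ x * g x) (fun x => c i * g x) (s i) :=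
    fun x hx => by simp only [hφ i hx]
  rw [← setIntegral_univ, ← hcover, integral_iUnion_fintype hs hdisj fun i =>
    (hg.const_mul (c i)).integrableOn.congr_fun (hcell i).symm (hs i)]
  exact Finset.sum_congr rfl fun i _ => by
    rw [setIntegral_congr_fun (hs i) (hcell i), integral_const_mul]

noncomputable def gaussMixture (N K : ℕ) (μt : Fin K → ℝ) (w : (Fin N → Fin K) → ℝ)
    (z : Fin N → ℝ) : ℝ :=
  ∑ k : Fin N → Fin K, gaussPdf N (fun i => μt (k i)) z * w k

lemma integrable_gaussMixture (N K : ℕ) (μt : Fin K → ℝ) (w : (Fin N → Fin K) → ℝ) :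
    Integrable (gaussMixture N K μt w) :=
  integrable_finsetSum _ fun k _ => (integrable_gaussPdf N _).mul_const (w k)

lemma setIntegral_gaussMixture (N K : ℕ) (μt : Fin K → ℝ) (w : (Fin N → Fin K) → ℝ)
    (s : Set (Fin N → ℝ)) :
    ∫ z in s, gaussMixture N K μt w z =
      ∑ m : Fin N → Fin K, w m * ∫ z in s, gaussPdf N (fun i => μt (m i)) z := by
  unfold gaussMixture
  rw [integral_finsetSum _ fun m _ =>
    ((integrable_gaussPdf N _).mul_const (w m)).integrableOn]
  exact Finset.sum_congr rfl fun m _ => by rw [integral_mul_const, mul_comm]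

lemma integral_gaussPdf_step_mul {N K : ℕ} {C : Fin K → Set ℝ}
    (hCmeas : ∀ k, MeasurableSet (C k)) (hCdisj : Pairwise (Disjoint on C))
    (hCcover : ⋃ k, C k = univ) {μt : Fin K → ℝ} {f : (Fin N → ℝ) → (Fin N → ℝ)}
    (hf : ∀ (z : Fin N → ℝ) (i : Fin N) (k : Fin K), z i ∈ C k → f z i = μt k)
    {g : (Fin N → ℝ) → ℝ} (hg : Integrable g) (z : Fin N → ℝ) :
    ∫ z', gaussPdf N (f z') z * g z' =
      gaussMixture N K μt (fun k => ∫ z' in cellProd N K C k, g z') z :=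
  integral_mul_eq_sum_of_eqOn_partition (measurableSet_cellProd hCmeas)
    (pairwise_disjoint_cellProd hCdisj) (iUnion_cellProd hCcover)
    (fun k z' hz' => by simp only [funext fun i => hf z' i (k i) (hz' i)]) hg

theorem stmt_11_general (N K : ℕ)
    (C : Fin K → Set ℝ)
    (hCmeas : ∀ k, MeasurableSet (C k))
    (hCdisj : ∀ k k' : Fin K, k ≠ k' → Disjoint (C k) (C k'))
    (hCcover : (⋃ k, C k) = Set.univ)
    (μt : Fin K → ℝ)
    (f : (Fin N → ℝ) → (Fin N → ℝ))
    (hf : ∀ (z : Fin N → ℝ) (i : Fin N) (k : Fin K), z i ∈ C k → f z i = μt k)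
    (τ : ℕ → Equiv.Perm (Fin N))
    (A : ℕ → Set (Fin N → ℝ))
    (hA : ∀ t, A t = orderCone N (τ t))
    (zprior : Fin N → ℝ)
    (α : ℕ → (Fin N → ℝ) → ℝ)
    (q : ℕ → (Fin N → Fin K) → ℝ)
    (hα1 : ∀ z, α 1 z =
      (A 1).indicator (fun z => ∫ z0, gaussPdf N (f z0) z * gaussPdf N zprior z0) z)
    (hαs : ∀ t, 1 ≤ t → ∀ z, α (t + 1) z =
      (A (t + 1)).indicator (fun z => ∫ z', gaussPdf N (f z') z * α t z') z)
    (hq1 : ∀ k, q 1 k = ∫ z0 in cellProd N K C k, gaussPdf N zprior z0)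
    (hqs : ∀ t, 1 ≤ t → ∀ k, q (t + 1) k =
      ∑ m : Fin N → Fin K, q t m *
        ∫ z in (cellProd N K C k ∩ A t), gaussPdf N (fun i => μt (m i)) z) :
    ∀ t, 1 ≤ t → ∃ c > 0, ∀ z, α t z =
      c * (A t).indicator
        (fun z => ∑ k : Fin N → Fin K, gaussPdf N (fun i => μt (k i)) z * q t k) z := by
  have step {g : (Fin N → ℝ) → ℝ} (hg : Integrable g) :=
    integral_gaussPdf_step_mul hCmeas hCdisj hCcover hf hg
  suffices h : ∀ t, 1 ≤ t → α t = (A t).indicator (gaussMixture N K μt (q t)) from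
    fun t ht => ⟨1, one_pos, fun z => by rw [h t ht, one_mul]; rfl⟩
  intro t ht
  induction t, ht using Nat.le_induction with
  | base =>
    funext z
    simp only [hα1, step (integrable_gaussPdf N zprior), ← hq1]
  | succ t ht ih =>
    have hmA : MeasurableSet (A t) := hA t ▸ measurableSet_orderCone N (τ t)
    have hint : Integrable (α t) := ih ▸ (integrable_gaussMixture N K μt (q t)).indicator hmA
    have hweights : (fun k => ∫ z' in cellProd N K C k, α t z') = q (t + 1) := by
      funext k
      rw [ih, setIntegral_indicator hmA, setIntegral_gaussMixture, hqs t ht]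
    funext z
    simp only [hαs t ht, step hint, hweights]

/-- filtering recursion for the HMM with rank observations.
The latent state evolves as z_t | z_{t-1} ~ N(f(z_{t-1}), I_N) with f a
coordinatewise step function on the partition {C_k} with values μ̃_k, the
observation is the rank of z_t (i.e. z_t lies in the order cone A_t), and the
(unnormalized) filtering density α_t satisfies the forward recursion.  Then
α_t, hence the filtering density p(z_t | τ_{1:t}), is proportional to
𝟙(z ∈ A_t) Σ_k N(z | μ̃_k, I_N) q_{k,t} with the stated weight recursion. -/
theorem stmt_11 (N K : ℕ) (hN : 0 < N) (hK : 0 < K)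
    (C : Fin K → Set ℝ)
    (hCmeas : ∀ k, MeasurableSet (C k))
    (hCdisj : ∀ k k' : Fin K, k ≠ k' → Disjoint (C k) (C k'))
    (hCcover : (⋃ k, C k) = Set.univ)
    (μt : Fin K → ℝ)
    (f : (Fin N → ℝ) → (Fin N → ℝ))
    (hf : ∀ (z : Fin N → ℝ) (i : Fin N) (k : Fin K), z i ∈ C k → f z i = μt k)
    (τ : ℕ → Equiv.Perm (Fin N))
    (A : ℕ → Set (Fin N → ℝ))
    (hA : ∀ t, A t = orderCone N (τ t))
    (zprior : Fin N → ℝ)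
    (α : ℕ → (Fin N → ℝ) → ℝ)
    (q : ℕ → (Fin N → Fin K) → ℝ)
    (hα1 : ∀ z, α 1 z =
      (A 1).indicator (fun z => ∫ z0, gaussPdf N (f z0) z * gaussPdf N zprior z0) z)
    (hαs : ∀ t, 1 ≤ t → ∀ z, α (t + 1) z =
      (A (t + 1)).indicator (fun z => ∫ z', gaussPdf N (f z') z * α t z') z)
    (hq1 : ∀ k, q 1 k = ∫ z0 in cellProd N K C k, gaussPdf N zprior z0)
    (hqs : ∀ t, 1 ≤ t → ∀ k, q (t + 1) k =
      ∑ m : Fin N → Fin K, q t m *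
        ∫ z in (cellProd N K C k ∩ A t), gaussPdf N (fun i => μt (m i)) z) :
    ∀ t, 1 ≤ t → ∃ c > 0, ∀ z, α t z =
      c * (A t).indicator
        (fun z => ∑ k : Fin N → Fin K, gaussPdf N (fun i => μt (k i)) z * q t k) z :=
  stmt_11_general N K C hCmeas hCdisj hCcover μt f hf τ A hA zprior α q hα1 hαs hq1 hqs
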